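/- arXiv:2306.01922 — 2 statements merged into one kernel-verified Lean document; each statement's English description precedes it below -/
import Mathlib

section
/- Let H' be a set of classifiers agreeing on Rᶜ ⊆ X, let D_g be a distribution, and define the two-part loss estimate L_{S;R}(h|g) = P_{D_g}(x∈R)·L_{S_R}(h) + P_{D_g}(x∈Rᶜ)·L_{S_{Rᶜ}}(h₀) for a fixed representative h₀ ∈ H'. If |L_{S_R}(h) − P_{D_g}(h(x)≠y | x∈R)| ≤ α for all h ∈ H' and |L_{S_{Rᶜ}}(h₀) − P_{D_g}(h₀(x)≠y | x∈Rᶜ)| ≤ β, and both P_{D_g}(x∈R) > 0 and P_{D_g}(x∈Rᶜ) > 0, then for every h ∈ H': |L_{D_g}(h) − L_{S;R}(h|g)| ≤ P_{D_g}(x∈R)·α + β. -/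
open MeasureTheory

/-- Two-part loss estimate: if all `h ∈ H'` agree with the representative `h₀` off `R`,
the empirical estimate on `R` is `α`-accurate uniformly on `H'`, and the empirical
estimate for `h₀` on `Rᶜ` is `β`-accurate, then the combined estimator is
`(P(R)·α + β)`-accurate for every `h ∈ H'`. -/
theorem two_part_estimator_accuracy {X : Type*} [MeasurableSpace X]
    (D : Measure (X × ℤ)) [IsProbabilityMeasure D]
    (R : Set X) (hR : MeasurableSet R)
    (H' : Set (X → ℤ)) (hmeas : ∀ h ∈ H', Measurable h)
    (h₀ : X → ℤ) (h₀H : h₀ ∈ H')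
    (hagree : ∀ h ∈ H', ∀ x ∉ R, h x = h₀ x)
    (LSR : (X → ℤ) → ℝ) (LSRc : ℝ) (α β : ℝ)
    (hpR : 0 < (D {p : X × ℤ | p.1 ∈ R}).toReal)
    (hpRc : 0 < (D {p : X × ℤ | p.1 ∈ Rᶜ}).toReal)
    (hα : ∀ h ∈ H',
      |LSR h - (D {p : X × ℤ | h p.1 ≠ p.2 ∧ p.1 ∈ R}).toReal
        / (D {p : X × ℤ | p.1 ∈ R}).toReal| ≤ α)
    (hβ : |LSRc - (D {p : X × ℤ | h₀ p.1 ≠ p.2 ∧ p.1 ∈ Rᶜ}).toReal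
        / (D {p : X × ℤ | p.1 ∈ Rᶜ}).toReal| ≤ β) :
    ∀ h ∈ H',
      |(D {p : X × ℤ | h p.1 ≠ p.2}).toReal
        - ((D {p : X × ℤ | p.1 ∈ R}).toReal * LSR h
            + (D {p : X × ℤ | p.1 ∈ Rᶜ}).toReal * LSRc)|
        ≤ (D {p : X × ℤ | p.1 ∈ R}).toReal * α + β := by
  intro h hH
  set pR := (D {p : X × ℤ | p.1 ∈ R}).toReal with hpRdef
  set pRc := (D {p : X × ℤ | p.1 ∈ Rᶜ}).toReal with hpRcdef
  set a := (D {p : X × ℤ | h p.1 ≠ p.2 ∧ p.1 ∈ R}).toReal with hadef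
  set b := (D {p : X × ℤ | h₀ p.1 ≠ p.2 ∧ p.1 ∈ Rᶜ}).toReal with hbdef
  -- split the error set
  have hsplit : {p : X × ℤ | h p.1 ≠ p.2} =
      {p : X × ℤ | h p.1 ≠ p.2 ∧ p.1 ∈ R} ∪ {p : X × ℤ | h₀ p.1 ≠ p.2 ∧ p.1 ∈ Rᶜ} := by
    ext p
    by_cases hp : p.1 ∈ R
    · simp [hp]
    · simp [hp, hagree h hH p.1 hp]
  have hmh : Measurable h := hmeas h hH
  have hmeasA : MeasurableSet {p : X × ℤ | h p.1 ≠ p.2 ∧ p.1 ∈ R} := by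
    have : Measurable fun p : X × ℤ => (h p.1, p.2) := (hmh.comp measurable_fst).prodMk measurable_snd
    exact ((measurableSet_eq_fun (hmh.comp measurable_fst) measurable_snd).compl).inter
      (hR.preimage measurable_fst)
  have hmeasB : MeasurableSet {p : X × ℤ | h₀ p.1 ≠ p.2 ∧ p.1 ∈ Rᶜ} := by
    exact ((measurableSet_eq_fun ((hmeas h₀ h₀H).comp measurable_fst) measurable_snd).compl).inter
      (hR.compl.preimage measurable_fst)
  have hdisj : Disjoint {p : X × ℤ | h p.1 ≠ p.2 ∧ p.1 ∈ R}
      {p : X × ℤ | h₀ p.1 ≠ p.2 ∧ p.1 ∈ Rᶜ} := by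
    rw [Set.disjoint_left]
    rintro p ⟨_, hp⟩ ⟨_, hp'⟩
    exact hp' hp
  have hmu : D {p : X × ℤ | h p.1 ≠ p.2} =
      D {p : X × ℤ | h p.1 ≠ p.2 ∧ p.1 ∈ R} + D {p : X × ℤ | h₀ p.1 ≠ p.2 ∧ p.1 ∈ Rᶜ} := by
    rw [hsplit, measure_union hdisj hmeasB]
  have hsum : (D {p : X × ℤ | h p.1 ≠ p.2}).toReal = a + b := by
    rw [hmu, ENNReal.toReal_add (measure_ne_top _ _) (measure_ne_top _ _)]
  have hpRne : pR ≠ 0 := ne_of_gt hpR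
  have hpRcne : pRc ≠ 0 := ne_of_gt hpRc
  have haR : pR * (a / pR) = a := by field_simp
  have hbRc : pRc * (b / pRc) = b := by field_simp
  have key : (D {p : X × ℤ | h p.1 ≠ p.2}).toReal - (pR * LSR h + pRc * LSRc)
      = pR * (a / pR - LSR h) + pRc * (b / pRc - LSRc) := by
    rw [hsum]
    field_simp
    ring
  rw [key]
  have h1 : |pR * (a / pR - LSR h)| ≤ pR * α := by
    rw [abs_mul, abs_of_pos hpR, abs_sub_comm]
    exact mul_le_mul_of_nonneg_left (hα h hH) hpR.le
  have hpRc1 : pRc ≤ 1 := by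
    have h1le : D {p : X × ℤ | p.1 ∈ Rᶜ} ≤ 1 := prob_le_one
    calc pRc ≤ (1 : ENNReal).toReal := ENNReal.toReal_mono ENNReal.one_ne_top h1le
    _ = 1 := by simp
  have hβ0 : 0 ≤ β := le_trans (abs_nonneg _) hβ
  have h2 : |pRc * (b / pRc - LSRc)| ≤ β := by
    rw [abs_mul, abs_of_pos hpRc, abs_sub_comm]
    calc pRc * |LSRc - b / pRc| ≤ 1 * β :=
      mul_le_mul hpRc1 hβ (abs_nonneg _) zero_le_one
    _ = β := one_mul β
  calc |pR * (a / pR - LSR h) + pRc * (b / pRc - LSRc)|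
      ≤ |pR * (a / pR - LSR h)| + |pRc * (b / pRc - LSRc)| := abs_add_le _ _
    _ ≤ pR * α + β := add_le_add h1 h2
end

section
/- If group realizability holds — for each g ∈ G there exists h_g* ∈ H with L_g(h_g*) = 0 — this does not imply full realizability: there exist a finite instance space, a hypothesis class H, and two distributions D₁, D₂ each realizable by some member of H, such that inf_{h∈H} max(L_{D₁}(h), L_{D₂}(h)) > 0. -/
open MeasureTheory

/-- Group realizability does not imply full realizability: there is a finite
instance space, a hypothesis class `H`, and two distributions each realizable by
a member of `H`, whose multi-group noise rate is strictly positive. -/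
theorem group_realizable_not_realizable :
    ∃ (X : Type) (_ : MeasurableSpace X) (_ : Finite X)
      (H : Set (X → ℤ)) (D₁ D₂ : Measure (X × ℤ)),
      IsProbabilityMeasure D₁ ∧ IsProbabilityMeasure D₂
      ∧ (∃ h₁ ∈ H, D₁ {p : X × ℤ | h₁ p.1 ≠ p.2} = 0)
      ∧ (∃ h₂ ∈ H, D₂ {p : X × ℤ | h₂ p.1 ≠ p.2} = 0)
      ∧ H.Nonempty
      ∧ 0 < sInf {r : ℝ | ∃ h ∈ H,
          r = max (D₁ {p : X × ℤ | h p.1 ≠ p.2}).toReal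
                  (D₂ {p : X × ℤ | h p.1 ≠ p.2}).toReal} := by
  refine ⟨Unit, ⊤, inferInstance,
    {fun _ => (1 : ℤ), fun _ => (-1 : ℤ)},
    Measure.dirac ((), 1), Measure.dirac ((), -1),
    inferInstance, inferInstance, ?_, ?_, ?_, ?_⟩
  · refine ⟨fun _ => 1, Or.inl rfl, ?_⟩
    rw [Measure.dirac_apply' _ ((Set.to_countable _).measurableSet)]
    simp [Set.indicator]
  · refine ⟨fun _ => -1, Or.inr rfl, ?_⟩
    rw [Measure.dirac_apply' _ ((Set.to_countable _).measurableSet)]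
    simp [Set.indicator]
  · exact ⟨fun _ => 1, Or.inl rfl⟩
  · have hset : {r : ℝ | ∃ h ∈ ({fun _ => (1 : ℤ), fun _ => (-1 : ℤ)} : Set (Unit → ℤ)),
        r = max ((Measure.dirac (((), 1) : Unit × ℤ)) {p : Unit × ℤ | h p.1 ≠ p.2}).toReal
                ((Measure.dirac (((), -1) : Unit × ℤ)) {p : Unit × ℤ | h p.1 ≠ p.2}).toReal}
        = {1} := by
      ext r
      simp only [Set.mem_setOf_eq, Set.mem_singleton_iff]
      constructor
      · rintro ⟨h, hh, rfl⟩
        rcases hh with rfl | rfl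
        · rw [Measure.dirac_apply' _ ((Set.to_countable _).measurableSet), Measure.dirac_apply' _ ((Set.to_countable _).measurableSet)]
          simp [Set.indicator]
        · rw [Measure.dirac_apply' _ ((Set.to_countable _).measurableSet), Measure.dirac_apply' _ ((Set.to_countable _).measurableSet)]
          simp [Set.indicator]
      · rintro rfl
        refine ⟨fun _ => 1, Or.inl rfl, ?_⟩
        rw [Measure.dirac_apply' _ ((Set.to_countable _).measurableSet), Measure.dirac_apply' _ ((Set.to_countable _).measurableSet)]
        simp [Set.indicator]
    rw [hset]
    simp
end
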